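/- arXiv:1103.5430 — 2 statements merged into one kernel-verified Lean document; each statement's English description precedes it below -/
import Mathlib

section
/- For every nonnegative integer n, Σ_{k=0}^n k H_k^{(3)} = (n(n+1)/2) H_{n+1}^{(3)} + (1/2) H_{n+1}^{(2)} − (1/2) H_{n+1}. -/
/-- Generalized harmonic number `H n m = ∑_{k=1}^n 1/k^m` (order `m : ℤ`), as a rational. -/
def H (n : ℕ) (m : ℤ) : ℚ := ∑ k ∈ Finset.range n, ((k : ℚ) + 1) ^ (-m)

lemma H_succ (n : ℕ) (m : ℤ) : H (n + 1) m = H n m + ((n : ℚ) + 1) ^ (-m) :=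
  Finset.sum_range_succ _ _

theorem sum_k_harmonic3 (n : ℕ) :
    ∑ k ∈ Finset.range (n + 1), (k : ℚ) * H k 3
      = ((n : ℚ) * ((n : ℚ) + 1) / 2) * H (n + 1) 3 + (1 / 2) * H (n + 1) 2
        - (1 / 2) * H (n + 1) 1 := by
  induction n with
  | zero => simp [H]
  | succ n ih =>
    rw [Finset.sum_range_succ, ih, H_succ (n + 1) 3, H_succ (n + 1) 2, H_succ (n + 1) 1]
    have hpos : ((n : ℚ) + 1 + 1) ≠ 0 := by positivity
    push_cast
    simp only [zpow_neg, zpow_ofNat]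
    field_simp
    ring
end

section
/- For every nonnegative integer n, Σ_{k=0}^n k^2 H_{n−k} = (n(n+1)(2n+1)/6) H_{n+1} − n(n+1)(22n+5)/36. -/
/-! Induction on `n`: passing from `n` to `n + 1` raises every `H_{n-k}` by `1/(n+1-k)`, so the
left side grows by
`∑_{k ≤ n} k²/(n+1-k) = ∑_{j=1}^{n+1} (n+1-j)²/j = (n+1)² H_{n+1} - 2(n+1)² + (n+1)(n+2)/2`,
which is also the growth of the right side. -/

open Finset

lemma H_one_succ (n : ℕ) : H (n + 1) 1 = H n 1 + 1 / ((n : ℚ) + 1) := by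
  simp [H, sum_range_succ]

lemma sum_range_cast_add_one (n : ℕ) :
    ∑ j ∈ range n, ((j : ℚ) + 1) = (n : ℚ) * ((n : ℚ) + 1) / 2 := by
  induction n with
  | zero => simp
  | succ n ih => rw [sum_range_succ, ih]; push_cast; ring

lemma sum_mul_H_one_sub_succ (f : ℕ → ℚ) (n : ℕ) :
    ∑ k ∈ range (n + 2), f k * H (n + 1 - k) 1
      = ∑ k ∈ range (n + 1), f k * H (n - k) 1
        + ∑ k ∈ range (n + 1), f k / ((n : ℚ) + 1 - k) := by
  rw [sum_range_succ, Nat.sub_self, ← sum_add_distrib]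
  simp only [H, range_zero, sum_empty, mul_zero, add_zero]
  refine sum_congr rfl fun k hk => ?_
  have hkn : k ≤ n := Nat.lt_succ_iff.mp (mem_range.mp hk)
  rw [show n + 1 - k = n - k + 1 by omega, ← H, ← H, H_one_succ, Nat.cast_sub hkn]
  ring

lemma sum_sq_div_sub (n : ℕ) :
    ∑ k ∈ range (n + 1), (k : ℚ) ^ 2 / ((n : ℚ) + 1 - k)
      = ((n : ℚ) + 1) ^ 2 * H (n + 1) 1 - 2 * ((n : ℚ) + 1) ^ 2
        + ((n : ℚ) + 1) * ((n : ℚ) + 2) / 2 := by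
  rw [← sum_range_reflect]
  have hterm : ∀ j ∈ range (n + 1),
      ((n + 1 - 1 - j : ℕ) : ℚ) ^ 2 / ((n : ℚ) + 1 - (n + 1 - 1 - j : ℕ))
        = ((n : ℚ) + 1) ^ 2 * ((j : ℚ) + 1) ^ (-1 : ℤ) - 2 * ((n : ℚ) + 1) + ((j : ℚ) + 1) := by
    intro j hj
    have hjn : j ≤ n := Nat.lt_succ_iff.mp (mem_range.mp hj)
    rw [Nat.add_sub_cancel, Nat.cast_sub hjn, zpow_neg_one,
      show (n : ℚ) + 1 - (n - j) = j + 1 by ring]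
    field_simp
    ring
  rw [sum_congr rfl hterm, sum_add_distrib, sum_sub_distrib, ← mul_sum, sum_range_cast_add_one,
    sum_const, card_range]
  simp only [H, nsmul_eq_mul]
  push_cast
  ring

theorem sum_k2_harmonic_rev (n : ℕ) :
    ∑ k ∈ Finset.range (n + 1), (k : ℚ) ^ 2 * H (n - k) 1
      = ((n : ℚ) * ((n : ℚ) + 1) * (2 * (n : ℚ) + 1) / 6) * H (n + 1) 1
        - (n : ℚ) * ((n : ℚ) + 1) * (22 * (n : ℚ) + 5) / 36 := by
  induction n with
  | zero => simp [H]
  | succ n ih =>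
    rw [sum_mul_H_one_sub_succ (fun k => (k : ℚ) ^ 2), ih, sum_sq_div_sub, H_one_succ (n + 1)]
    push_cast
    field_simp
    ring
end
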